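/- arXiv:1304.6189 — 8 statements merged into one kernel-verified Lean document; each statement's English description precedes it below -/
import Mathlib

section
/- For any finite simple graph G and any vertex subsets A, B of V(G), the vertex boundary function is submodular: |N(A ∩ B)| + |N(A ∪ B)| ≤ |N(A)| + |N(B)|, where N(X) denotes the open neighborhood of X, i.e., the set of vertices outside X adjacent to some vertex of X. -/
open SimpleGraph

/-- Open neighborhood of a vertex set: vertices outside `X` adjacent to some vertex of `X`. -/
def vb {V : Type*} (G : SimpleGraph V) (X : Set V) : Set V :=
  {v | v ∉ X ∧ ∃ u ∈ X, G.Adj u v}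

/-- Vertices reachable from the set `X` in `G - S`. -/
def reachAvoid {V : Type*} (G : SimpleGraph V) (S X : Set V) : Set V :=
  {v | ∃ x ∈ X, ∃ p : G.Walk x v, ∀ w ∈ p.support, w ∉ S}

/-- `S` is a vertex `(X,Y)`-separator. -/
def isSep {V : Type*} (G : SimpleGraph V) (X Y S : Set V) : Prop :=
  S ⊆ (X ∪ Y)ᶜ ∧ ∀ y ∈ Y, y ∉ reachAvoid G S X

/-- `S` is an important `(X,Y)`-separator. -/
def isImpSep {V : Type*} (G : SimpleGraph V) (X Y S : Set V) : Prop :=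
  isSep G X Y S ∧ (∀ S' ⊂ S, ¬ isSep G X Y S') ∧
    ¬ ∃ T, isSep G X Y T ∧ T.ncard ≤ S.ncard ∧ reachAvoid G S X ⊂ reachAvoid G T X

/-- Edge boundary of a vertex set. -/
def edgeBoundary {V : Type*} (G : SimpleGraph V) (X : Set V) : Set (Sym2 V) :=
  {e | ∃ a b, e = s(a, b) ∧ G.Adj a b ∧ a ∈ X ∧ b ∉ X}

/-- Submodularity of the vertex boundary. -/
theorem vertex_boundary_submodular {V : Type*} [Fintype V] (G : SimpleGraph V) (A B : Set V) :
    (vb G (A ∩ B)).ncard + (vb G (A ∪ B)).ncard ≤ (vb G A).ncard + (vb G B).ncard := by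
  classical
  have hunion : vb G (A ∩ B) ∪ vb G (A ∪ B) ⊆ vb G A ∪ vb G B := by
    rintro v (⟨hv, u, ⟨huA, huB⟩, hadj⟩ | ⟨hv, u, (huA | huB), hadj⟩)
    · by_cases hA : v ∈ A
      · exact Or.inr ⟨fun hB => hv ⟨hA, hB⟩, u, huB, hadj⟩
      · exact Or.inl ⟨hA, u, huA, hadj⟩
    · exact Or.inl ⟨fun h => hv (Or.inl h), u, huA, hadj⟩
    · exact Or.inr ⟨fun h => hv (Or.inr h), u, huB, hadj⟩
  have hinter : vb G (A ∩ B) ∩ vb G (A ∪ B) ⊆ vb G A ∩ vb G B := by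
    rintro v ⟨⟨_, u, ⟨huA, huB⟩, hadj⟩, hv2, _⟩
    exact ⟨⟨fun h => hv2 (Or.inl h), u, huA, hadj⟩, ⟨fun h => hv2 (Or.inr h), u, huB, hadj⟩⟩
  have h1 := Set.ncard_union_add_ncard_inter (vb G (A ∩ B)) (vb G (A ∪ B))
  have h2 := Set.ncard_union_add_ncard_inter (vb G A) (vb G B)
  have h3 := Set.ncard_le_ncard hunion (Set.toFinite _)
  have h4 := Set.ncard_le_ncard hinter (Set.toFinite _)
  omega
end

section
/- Let G be a finite graph, u a vertex, and for v not adjacent or equal to u suppose S_v is a minimum-size (u,v)-separator such that no (u,v)-separator T with |T| ≤ |S_v| satisfies R(v,T) ⊋ R(v,S_v) (i.e., S_v is the important minimum separator from v's side). Write R(v) = R(v,S_v) for the set of vertices reachable from v in G − S_v. Then for any two such vertices v, w, if w ∈ R(v) then R(w) ⊆ R(v). -/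
open SimpleGraph

section Helpers
variable {V : Type*} {G : SimpleGraph V} {S X A B : Set V}

lemma mem_reachAvoid_self {v : V} (h : v ∉ S) : v ∈ reachAvoid G S {v} :=
  ⟨v, rfl, SimpleGraph.Walk.nil, by intro z hz; simp at hz; subst hz; exact h⟩

lemma reachAvoid_not_mem {x : V} (hx : x ∈ reachAvoid G S X) : x ∉ S := by
  obtain ⟨a, ha, p, hp⟩ := hx
  exact hp x p.end_mem_support

lemma reachAvoid_adj {x y : V} (hx : x ∈ reachAvoid G S X) (hadj : G.Adj x y) (hy : y ∉ S) :
    y ∈ reachAvoid G S X := by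
  obtain ⟨a, ha, p, hp⟩ := hx
  refine ⟨a, ha, p.concat hadj, ?_⟩
  intro z hz
  rw [SimpleGraph.Walk.support_concat, List.mem_append] at hz
  rcases hz with h | h
  · exact hp z h
  · simp at h; subst h; exact hy

lemma reachAvoid_support [DecidableEq V] {v x : V} (p : G.Walk v x)
    (hp : ∀ w ∈ p.support, w ∉ S) {y : V} (hy : y ∈ p.support) :
    y ∈ reachAvoid G S {v} :=
  ⟨v, rfl, p.takeUntil y hy, fun z hz => hp z ((p.support_takeUntil_subset hy) hz)⟩

lemma reachAvoid_eq_of_mem {v w : V} (h : w ∈ reachAvoid G S {v}) :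
    reachAvoid G S {w} = reachAvoid G S {v} := by
  obtain ⟨a, ha, p, hp⟩ := h
  have ha' : a = v := ha
  subst ha'
  ext x
  constructor
  · rintro ⟨b, hb, q, hq⟩
    have hb' : b = w := hb
    subst hb'
    refine ⟨a, rfl, p.append q, ?_⟩
    intro z hz
    rw [SimpleGraph.Walk.support_append, List.mem_append] at hz
    rcases hz with h | h
    · exact hp z h
    · exact hq z (List.mem_of_mem_tail h)
  · rintro ⟨b, hb, q, hq⟩
    have hb' : b = a := hb
    subst hb'
    refine ⟨w, rfl, p.reverse.append q, ?_⟩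
    intro z hz
    rw [SimpleGraph.Walk.support_append, List.mem_append] at hz
    rcases hz with h | h
    · rw [SimpleGraph.Walk.support_reverse, List.mem_reverse] at h
      exact hp z h
    · exact hq z (List.mem_of_mem_tail h)

lemma walk_hits_vb {a b : V} (p : G.Walk a b) (ha : a ∈ A) (hb : b ∉ A) :
    ∃ z ∈ p.support, z ∈ vb G A := by
  classical
  revert ha hb
  induction p with
  | nil => intro ha hb; exact absurd ha hb
  | @cons a c b h q ih =>
    intro ha hb
    by_cases hc : c ∈ A
    · obtain ⟨z, hz, hzb⟩ := ih hc hb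
      exact ⟨z, by simp [hz], hzb⟩
    · exact ⟨c, by simp, hc, a, ha, h⟩

lemma isSep_vb {v u : V} (hv : v ∈ A) (hu : u ∉ A) (huv : u ∉ vb G A) :
    isSep G {v} {u} (vb G A) := by
  constructor
  · intro z hz
    simp only [Set.mem_compl_iff, Set.mem_union, Set.mem_singleton_iff]
    rintro (rfl | rfl)
    · exact hz.1 hv
    · exact huv hz
  · rintro y hy ⟨a, ha, p, hp⟩
    simp only [Set.mem_singleton_iff] at hy ha
    subst hy; subst ha
    obtain ⟨z, hz, hzb⟩ := walk_hits_vb p hv hu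
    exact hp z hz hzb

lemma vb_reachAvoid_subset : vb G (reachAvoid G S X) ⊆ S := by
  rintro z ⟨hz, x, hx, hadj⟩
  by_contra h
  exact hz (reachAvoid_adj hx hadj h)

lemma vb_submod [Fintype V] :
    (vb G (A ∪ B)).ncard + (vb G (A ∩ B)).ncard ≤ (vb G A).ncard + (vb G B).ncard := by
  classical
  have h1 : vb G (A ∪ B) ∪ vb G (A ∩ B) ⊆ vb G A ∪ vb G B := by
    rintro z (⟨hz, x, hx, hadj⟩ | ⟨hz, x, hx, hadj⟩)
    · rcases hx with hx | hx
      · exact Or.inl ⟨fun h => hz (Or.inl h), x, hx, hadj⟩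
      · exact Or.inr ⟨fun h => hz (Or.inr h), x, hx, hadj⟩
    · rcases (Classical.em (z ∈ A)) with hA | hA
      · exact Or.inr ⟨fun h => hz ⟨hA, h⟩, x, hx.2, hadj⟩
      · exact Or.inl ⟨hA, x, hx.1, hadj⟩
  have h2 : vb G (A ∪ B) ∩ vb G (A ∩ B) ⊆ vb G A ∩ vb G B := by
    rintro z ⟨⟨hz1, _⟩, hz2, x, hx, hadj⟩
    exact ⟨⟨fun h => hz1 (Or.inl h), x, hx.1, hadj⟩, ⟨fun h => hz1 (Or.inr h), x, hx.2, hadj⟩⟩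
  have e1 := Set.ncard_union_add_ncard_inter (vb G (A ∪ B)) (vb G (A ∩ B))
  have e2 := Set.ncard_union_add_ncard_inter (vb G A) (vb G B)
  have m1 : (vb G (A ∪ B) ∪ vb G (A ∩ B)).ncard ≤ (vb G A ∪ vb G B).ncard :=
    Set.ncard_le_ncard h1 (Set.toFinite _)
  have m2 : (vb G (A ∪ B) ∩ vb G (A ∩ B)).ncard ≤ (vb G A ∩ vb G B).ncard :=
    Set.ncard_le_ncard h2 (Set.toFinite _)
  omega

end Helpers

/-- Lemma 3: if `w ∈ R(v)` then `R(w) ⊆ R(v)`, where `R(·)` is the reachability set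
of the minimum-size important separator towards `u`. -/
theorem R_containment {V : Type*} [Fintype V] (G : SimpleGraph V) (u v w : V)
    (Sv Sw : Set V)
    (hv : isSep G {v} {u} Sv)
    (hvmin : ∀ T, isSep G {v} {u} T → Sv.ncard ≤ T.ncard)
    (hvimp : ¬ ∃ T, isSep G {v} {u} T ∧ T.ncard ≤ Sv.ncard ∧
        reachAvoid G Sv {v} ⊂ reachAvoid G T {v})
    (hw : isSep G {w} {u} Sw)
    (hwmin : ∀ T, isSep G {w} {u} T → Sw.ncard ≤ T.ncard)
    (hwimp : ¬ ∃ T, isSep G {w} {u} T ∧ T.ncard ≤ Sw.ncard ∧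
        reachAvoid G Sw {w} ⊂ reachAvoid G T {w})
    (hwin : w ∈ reachAvoid G Sv {v}) :
    reachAvoid G Sw {w} ⊆ reachAvoid G Sv {v} := by
  classical
  intro x hx
  by_contra hxA
  set A := reachAvoid G Sv {v} with hAdef
  set B := reachAvoid G Sw {w} with hBdef
  have hvSv : v ∉ Sv := fun h => (hv.1 h) (Or.inl rfl)
  have huSv : u ∉ Sv := fun h => (hv.1 h) (Or.inr rfl)
  have hwSw : w ∉ Sw := fun h => (hw.1 h) (Or.inl rfl)
  have huSw : u ∉ Sw := fun h => (hw.1 h) (Or.inr rfl)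
  have hvA : v ∈ A := mem_reachAvoid_self hvSv
  have hwA : w ∈ A := hwin
  have hwB : w ∈ B := mem_reachAvoid_self hwSw
  have huA : u ∉ A := hv.2 u rfl
  have huB : u ∉ B := hw.2 u rfl
  have hvbA : vb G A ⊆ Sv := vb_reachAvoid_subset
  have hvbB : vb G B ⊆ Sw := vb_reachAvoid_subset
  have huT : u ∉ vb G (A ∪ B) := by
    rintro ⟨hz, y, hy, hadj⟩
    rcases hy with hy | hy
    · exact huA (reachAvoid_adj hy hadj huSv)
    · exact huB (reachAvoid_adj hy hadj huSw)
  have huQ : u ∉ vb G (A ∩ B) := by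
    rintro ⟨hz, y, hy, hadj⟩
    exact huB (reachAvoid_adj hy.2 hadj huSw)
  have huAB : u ∉ A ∪ B := by rintro (h | h) <;> [exact huA h; exact huB h]
  have hTsep : isSep G {v} {u} (vb G (A ∪ B)) := isSep_vb (Or.inl hvA) huAB huT
  have hQsep : isSep G {w} {u} (vb G (A ∩ B)) :=
    isSep_vb ⟨hwA, hwB⟩ (fun h => huA h.1) huQ
  have hQcard : Sw.ncard ≤ (vb G (A ∩ B)).ncard := hwmin _ hQsep
  have hsm := vb_submod (G := G) (A := A) (B := B)
  have hcA : (vb G A).ncard ≤ Sv.ncard := Set.ncard_le_ncard hvbA (Set.toFinite _)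
  have hcB : (vb G B).ncard ≤ Sw.ncard := Set.ncard_le_ncard hvbB (Set.toFinite _)
  have hTcard : (vb G (A ∪ B)).ncard ≤ Sv.ncard := by omega
  have hsub : A ⊆ reachAvoid G (vb G (A ∪ B)) {v} := by
    intro y hy
    obtain ⟨a, ha, p, hp⟩ := hy
    have ha' : a = v := ha
    subst ha'
    refine ⟨a, rfl, p, ?_⟩
    intro z hz hzT
    exact hzT.1 (Or.inl (reachAvoid_support p hp hz))
  have hxReach : x ∈ reachAvoid G (vb G (A ∪ B)) {v} := by
    obtain ⟨b, hb, q, hq⟩ := hx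
    have hb' : b = w := hb
    subst hb'
    obtain ⟨a, ha, p, hp⟩ := hwin
    have ha' : a = v := ha
    subst ha'
    refine ⟨a, rfl, p.append q, ?_⟩
    intro z hz hzT
    rw [SimpleGraph.Walk.support_append, List.mem_append] at hz
    rcases hz with h | h
    · exact hzT.1 (Or.inl (reachAvoid_support p hp h))
    · exact hzT.1 (Or.inr (reachAvoid_support q hq (List.mem_of_mem_tail h)))
  exact hvimp ⟨vb G (A ∪ B), hTsep, hTcard,
    (Set.ssubset_iff_of_subset hsub).mpr ⟨x, hxReach, hxA⟩⟩
end

section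
/- Let G be a finite graph, and let X, Y be disjoint nonempty vertex sets such that some (X,Y)-separator exists. Then there is exactly one minimum-size (X,Y)-separator S such that no (X,Y)-separator T satisfies |T| = |S| and R(X,T) ⊋ R(X,S); that is, the important (X,Y)-separator of minimum size is unique. -/
open SimpleGraph

section Aux

variable {V : Type*} {G : SimpleGraph V} {X Y S T A B : Set V}

/-- A walk starting in `A` avoiding `vb G A` stays in `A`. -/
lemma stay_of_avoid_vb {A : Set V} : ∀ {x v : V} (p : G.Walk x v), x ∈ A →
    (∀ w ∈ p.support, w ∉ vb G A) → v ∈ A := by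
  intro x v p
  induction p with
  | nil => intro h _; exact h
  | @cons a b c hadj q ih =>
    intro ha hp
    have hb : b ∈ A := by
      by_contra hbA
      exact hp b (by simp [Walk.support_cons, q.start_mem_support]) ⟨hbA, a, ha, hadj⟩
    exact ih hb (fun w hw => hp w (by simp [Walk.support_cons, hw]))

lemma X_subset_reach (hS : isSep G X Y S) : X ⊆ reachAvoid G S X := by
  intro x hx
  refine ⟨x, hx, Walk.nil, ?_⟩
  intro w hw
  simp only [Walk.support_nil, List.mem_singleton] at hw
  subst hw
  intro hwS
  exact hS.1 hwS (Or.inl hx)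

lemma support_mem_reach {x v : V} (hx : x ∈ X) (p : G.Walk x v)
    (hp : ∀ w ∈ p.support, w ∉ S) : ∀ w ∈ p.support, w ∈ reachAvoid G S X := by
  classical
  intro w hw
  exact ⟨x, hx, p.takeUntil w hw, fun u hu => hp u (p.support_takeUntil_subset hw hu)⟩

lemma reach_disjoint : Disjoint (reachAvoid G S X) S := by
  rw [Set.disjoint_left]
  rintro v ⟨x, hx, p, hp⟩
  exact hp v p.end_mem_support

lemma vb_reach_subset (hS : isSep G X Y S) : vb G (reachAvoid G S X) ⊆ S := by
  rintro v ⟨hvR, u, huR, hadj⟩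
  by_contra hvS
  obtain ⟨x, hx, p, hp⟩ := huR
  refine hvR ⟨x, hx, p.concat hadj, ?_⟩
  intro w hw
  rw [Walk.support_concat, List.mem_append] at hw
  rcases hw with hw | hw
  · exact hp w hw
  · simp only [List.mem_singleton] at hw; subst hw; exact hvS

lemma reach_Y_disjoint (hS : isSep G X Y S) : Disjoint (reachAvoid G S X) Y := by
  rw [Set.disjoint_right]
  exact fun y hy => hS.2 y hy

lemma isSep_vb_s5 (hXA : X ⊆ A) (hAY : Disjoint A Y) (hvbY : Disjoint (vb G A) Y) :
    isSep G X Y (vb G A) := by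
  constructor
  · intro v hv
    simp only [Set.mem_compl_iff, Set.mem_union]
    rintro (hvX | hvY)
    · exact hv.1 (hXA hvX)
    · exact Set.disjoint_left.mp hvbY hv hvY
  · rintro y hy ⟨x, hx, p, hp⟩
    have : y ∈ A := stay_of_avoid_vb p (hXA hx) hp
    exact Set.disjoint_left.mp hAY this hy

lemma reach_mono_of_disjoint (h : Disjoint (reachAvoid G S X) T) :
    reachAvoid G S X ⊆ reachAvoid G T X := by
  rintro v ⟨x, hx, p, hp⟩
  refine ⟨x, hx, p, fun w hw => ?_⟩
  exact Set.disjoint_left.mp h (support_mem_reach hx p hp w hw)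

lemma vb_disjoint : Disjoint (vb G A) A := by
  rw [Set.disjoint_left]; exact fun v hv => hv.1

lemma vb_union_subset : vb G (A ∪ B) ⊆ vb G A ∪ vb G B := by
  rintro v ⟨hv, u, hu, hadj⟩
  simp only [Set.mem_union, not_or] at hv
  rcases hu with hu | hu
  · exact Or.inl ⟨hv.1, u, hu, hadj⟩
  · exact Or.inr ⟨hv.2, u, hu, hadj⟩

lemma vb_inter_subset : vb G (A ∩ B) ⊆ vb G A ∪ vb G B := by
  rintro v ⟨hv, u, hu, hadj⟩
  by_cases hvA : v ∈ A
  · exact Or.inr ⟨fun hvB => hv ⟨hvA, hvB⟩, u, hu.2, hadj⟩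
  · exact Or.inl ⟨hvA, u, hu.1, hadj⟩

lemma vb_union_inter_subset :
    vb G (A ∪ B) ∩ vb G (A ∩ B) ⊆ vb G A ∩ vb G B := by
  rintro v ⟨⟨hv1, _⟩, ⟨_, u, hu, hadj⟩⟩
  simp only [Set.mem_union, not_or] at hv1
  exact ⟨⟨hv1.1, u, hu.1, hadj⟩, ⟨hv1.2, u, hu.2, hadj⟩⟩

lemma vb_submodular [Fintype V] (A B : Set V) :
    (vb G (A ∪ B)).ncard + (vb G (A ∩ B)).ncard ≤ (vb G A).ncard + (vb G B).ncard := by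
  have h1 := Set.ncard_union_add_ncard_inter (vb G (A ∪ B)) (vb G (A ∩ B))
    (Set.toFinite _) (Set.toFinite _)
  have h2 := Set.ncard_union_add_ncard_inter (vb G A) (vb G B)
    (Set.toFinite _) (Set.toFinite _)
  have hu : vb G (A ∪ B) ∪ vb G (A ∩ B) ⊆ vb G A ∪ vb G B :=
    Set.union_subset vb_union_subset vb_inter_subset
  have hle1 : (vb G (A ∪ B) ∪ vb G (A ∩ B)).ncard ≤ (vb G A ∪ vb G B).ncard :=
    Set.ncard_le_ncard hu (Set.toFinite _)
  have hle2 : (vb G (A ∪ B) ∩ vb G (A ∩ B)).ncard ≤ (vb G A ∩ vb G B).ncard :=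
    Set.ncard_le_ncard vb_union_inter_subset (Set.toFinite _)
  omega

/-- Any two minimum reach-maximal separators coincide. -/
lemma min_imp_sep_unique [Fintype V] {G : SimpleGraph V} {X Y S T : Set V}
    (hS : isSep G X Y S ∧ (∀ T, isSep G X Y T → S.ncard ≤ T.ncard) ∧
      ¬ ∃ T, isSep G X Y T ∧ T.ncard = S.ncard ∧ reachAvoid G S X ⊂ reachAvoid G T X)
    (hT : isSep G X Y T ∧ (∀ T', isSep G X Y T' → T.ncard ≤ T'.ncard) ∧
      ¬ ∃ T', isSep G X Y T' ∧ T'.ncard = T.ncard ∧ reachAvoid G T X ⊂ reachAvoid G T' X) :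
    S = T := by
  obtain ⟨hSsep, hSmin, hSmax⟩ := hS
  obtain ⟨hTsep, hTmin, hTmax⟩ := hT
  set A := reachAvoid G S X with hA
  set B := reachAvoid G T X with hB
  have hcard : S.ncard = T.ncard := le_antisymm (hSmin T hTsep) (hTmin S hSsep)
  have hXA : X ⊆ A := X_subset_reach hSsep
  have hXB : X ⊆ B := X_subset_reach hTsep
  have hAY : Disjoint A Y := reach_Y_disjoint hSsep
  have hBY : Disjoint B Y := reach_Y_disjoint hTsep
  have hvbA : vb G A ⊆ S := vb_reach_subset hSsep
  have hvbB : vb G B ⊆ T := vb_reach_subset hTsep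
  have hSY : Disjoint S Y := by
    rw [Set.disjoint_left]; intro v hv hvY; exact hSsep.1 hv (Or.inr hvY)
  have hTY : Disjoint T Y := by
    rw [Set.disjoint_left]; intro v hv hvY; exact hTsep.1 hv (Or.inr hvY)
  have hvbAY : Disjoint (vb G A) Y := hSY.mono_left hvbA
  have hvbBY : Disjoint (vb G B) Y := hTY.mono_left hvbB
  -- vb A and vb B are separators
  have hsepA : isSep G X Y (vb G A) := isSep_vb_s5 hXA hAY hvbAY
  have hsepB : isSep G X Y (vb G B) := isSep_vb_s5 hXB hBY hvbBY
  -- so by minimality, vb A = S and vb B = T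
  have heqA : vb G A = S :=
    Set.eq_of_subset_of_ncard_le hvbA (hSmin _ hsepA) (Set.toFinite _)
  have heqB : vb G B = T :=
    Set.eq_of_subset_of_ncard_le hvbB (hTmin _ hsepB) (Set.toFinite _)
  -- union and intersection separators
  have hWsep : isSep G X Y (vb G (A ∪ B)) := by
    refine isSep_vb_s5 (fun x hx => Or.inl (hXA hx)) (Set.disjoint_union_left.mpr ⟨hAY, hBY⟩) ?_
    exact (Set.disjoint_union_left.mpr ⟨hvbAY, hvbBY⟩).mono_left vb_union_subset
  have hZsep : isSep G X Y (vb G (A ∩ B)) := by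
    refine isSep_vb_s5 (fun x hx => ⟨hXA hx, hXB hx⟩) (hAY.mono_left Set.inter_subset_left) ?_
    exact (Set.disjoint_union_left.mpr ⟨hvbAY, hvbBY⟩).mono_left vb_inter_subset
  have hsub := vb_submodular (G := G) A B
  have hWge : S.ncard ≤ (vb G (A ∪ B)).ncard := hSmin _ hWsep
  have hZge : S.ncard ≤ (vb G (A ∩ B)).ncard := hSmin _ hZsep
  have hvbAle : (vb G A).ncard = S.ncard := by rw [heqA]
  have hvbBle : (vb G B).ncard = T.ncard := by rw [heqB]
  have hWcard : (vb G (A ∪ B)).ncard = S.ncard := by omega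
  -- A ∪ B ⊆ reach of vb (A ∪ B)
  have hdisjW : Disjoint (vb G (A ∪ B)) (A ∪ B) := vb_disjoint
  have hAsub : A ⊆ reachAvoid G (vb G (A ∪ B)) X :=
    reach_mono_of_disjoint (hdisjW.symm.mono_left Set.subset_union_left)
  have hBsub : B ⊆ reachAvoid G (vb G (A ∪ B)) X :=
    reach_mono_of_disjoint (hdisjW.symm.mono_left Set.subset_union_right)
  -- maximality of S and T
  have hAeq : A = reachAvoid G (vb G (A ∪ B)) X := by
    by_contra hne
    exact hSmax ⟨vb G (A ∪ B), hWsep, hWcard, hAsub.ssubset_of_ne hne⟩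
  have hBeq : B = reachAvoid G (vb G (A ∪ B)) X := by
    by_contra hne
    exact hTmax ⟨vb G (A ∪ B), hWsep, by omega, hBsub.ssubset_of_ne hne⟩
  have hAB : A = B := hAeq.trans hBeq.symm
  rw [← heqA, ← heqB, hAB]

end Aux

/-- The minimum-size important separator is unique. -/
theorem unique_min_important_separator {V : Type*} [Fintype V] (G : SimpleGraph V)
    (X Y : Set V) (hXne : X.Nonempty) (hYne : Y.Nonempty) (hdisj : Disjoint X Y)
    (hex : ∃ S, isSep G X Y S) :
    ∃! S : Set V, isSep G X Y S ∧ (∀ T, isSep G X Y T → S.ncard ≤ T.ncard) ∧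
      ¬ ∃ T, isSep G X Y T ∧ T.ncard = S.ncard ∧ reachAvoid G S X ⊂ reachAvoid G T X := by
  -- k = minimum separator size
  set N : Set ℕ := {n | ∃ S, isSep G X Y S ∧ S.ncard = n} with hN
  have hNne : N.Nonempty := by
    obtain ⟨S, hS⟩ := hex
    exact ⟨S.ncard, S, hS, rfl⟩
  have hkmem := Nat.sInf_mem hNne
  set k := sInf N with hk
  obtain ⟨S₀, hS₀sep, hS₀card⟩ := hkmem
  -- among separators of size k, pick one with maximum reach
  set M : Set (Set V) := {S | isSep G X Y S ∧ S.ncard = k} with hM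
  have hMne : M.Nonempty := ⟨S₀, hS₀sep, hS₀card⟩
  obtain ⟨S, hSM, hSmaxwrt⟩ := Set.Finite.exists_maximalFor
    (fun S => (reachAvoid G S X).ncard) M (Set.toFinite M) hMne
  have hmin : ∀ T, isSep G X Y T → S.ncard ≤ T.ncard := by
    intro T hT
    rw [hSM.2]
    exact Nat.sInf_le ⟨T, hT, rfl⟩
  have hmax : ¬ ∃ T, isSep G X Y T ∧ T.ncard = S.ncard ∧
      reachAvoid G S X ⊂ reachAvoid G T X := by
    rintro ⟨T, hTsep, hTcard, hss⟩
    have hTM : T ∈ M := ⟨hTsep, by rw [hTcard, hSM.2]⟩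
    have hlt : (reachAvoid G S X).ncard < (reachAvoid G T X).ncard :=
      Set.ncard_lt_ncard hss (Set.toFinite _)
    have : (reachAvoid G T X).ncard ≤ (reachAvoid G S X).ncard := hSmaxwrt (j := T) hTM (le_of_lt hlt)
    omega
  refine ⟨S, ⟨hSM.1, hmin, hmax⟩, fun T hT => min_imp_sep_unique hT ⟨hSM.1, hmin, hmax⟩⟩
end

section
/- Let G be a finite graph and X, Y disjoint vertex sets. For every (X,Y)-separator S of size at most t, there exists an important (X,Y)-separator T with |T| ≤ |S| and R(X,S) ⊆ R(X,T). -/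
open SimpleGraph

lemma reachAvoid_anti {V : Type*} (G : SimpleGraph V) {S T : Set V} (X : Set V)
    (h : S ⊆ T) : reachAvoid G T X ⊆ reachAvoid G S X := by
  rintro v ⟨x, hx, p, hp⟩
  exact ⟨x, hx, p, fun w hw hwS => hp w hw (h hwS)⟩

/-- Every separator is dominated by an important separator. -/
theorem exists_dominating_important_separator {V : Type*} [Fintype V] (G : SimpleGraph V)
    (X Y : Set V) (hdisj : Disjoint X Y) (t : ℕ) (S : Set V)
    (hS : isSep G X Y S) (ht : S.ncard ≤ t) :
    ∃ T, isImpSep G X Y T ∧ T.ncard ≤ S.ncard ∧ reachAvoid G S X ⊆ reachAvoid G T X := by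
  classical
  set F : Set (Set V) := {T | isSep G X Y T ∧ T.ncard ≤ S.ncard ∧
    reachAvoid G S X ⊆ reachAvoid G T X} with hF
  have hSF : S ∈ F := ⟨hS, le_rfl, subset_rfl⟩
  obtain ⟨T, hTF, hTmax⟩ := Set.exists_max_image F (fun T => (reachAvoid G T X).ncard)
    (Set.toFinite F) ⟨S, hSF⟩
  set M : Set (Set V) := {U | U ⊆ T ∧ isSep G X Y U} with hM
  obtain ⟨T', hT'M, hT'min⟩ := Set.exists_min_image M (fun U => U.ncard)
    (Set.toFinite M) ⟨T, subset_rfl, hTF.1⟩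
  obtain ⟨hT'T, hT'sep⟩ := hT'M
  have hcard : T'.ncard ≤ S.ncard :=
    le_trans (Set.ncard_le_ncard hT'T (Set.toFinite T)) hTF.2.1
  have hreach : reachAvoid G S X ⊆ reachAvoid G T' X :=
    subset_trans hTF.2.2 (reachAvoid_anti G X hT'T)
  refine ⟨T', ⟨hT'sep, ?_, ?_⟩, hcard, hreach⟩
  · intro S' hS' hS'sep
    have : T'.ncard ≤ S'.ncard := hT'min S' ⟨subset_trans hS'.1 hT'T, hS'sep⟩
    have : S'.ncard < T'.ncard := Set.ncard_lt_ncard hS' (Set.toFinite T')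
    omega
  · rintro ⟨U, hUsep, hUcard, hUreach⟩
    have hUF : U ∈ F := ⟨hUsep, le_trans hUcard hcard, subset_trans hreach hUreach.1⟩
    have h1 : (reachAvoid G U X).ncard ≤ (reachAvoid G T X).ncard := hTmax U hUF
    have h2 : (reachAvoid G T X).ncard ≤ (reachAvoid G T' X).ncard :=
      Set.ncard_le_ncard (reachAvoid_anti G X hT'T) (Set.toFinite _)
    have h3 : (reachAvoid G T' X).ncard < (reachAvoid G U X).ncard :=
      Set.ncard_lt_ncard hUreach (Set.toFinite _)
    omega
end

section
/- Let G be a finite graph, u a vertex, and X a vertex set with u ∈ X that is inclusion-minimal among sets containing u with |X| ≤ k and |N(X)| ≤ t. Suppose v ∉ X ∪ N(X), S_v is the unique minimum important (v,u)-separator, A = R(v,S_v), |S_v| ≤ t, and A is inclusion-minimal among all such reachability sets. Then A is either contained in X ∪ N(X) or disjoint from X ∪ N(X). -/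
open SimpleGraph

private lemma crossing {V : Type*} {G : SimpleGraph V} {X : Set V} :
    ∀ {v u : V} (p : G.Walk v u), v ∉ X → u ∈ X →
    ∃ z x : V, G.Adj z x ∧ x ∈ X ∧ z ∉ X ∧
      ∃ q : G.Walk v z, (∀ w ∈ q.support, w ∈ p.support) ∧ ∀ w ∈ q.support, w ∉ X := by
  intro v u p
  induction p with
  | nil => intro hv hu; exact absurd hu hv
  | @cons a b c h p ih =>
    intro hv hu
    by_cases hb : b ∈ X
    · refine ⟨a, b, h, hb, hv, Walk.nil, ?_, ?_⟩ <;>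
        · intro w hw
          simp only [Walk.support_nil, List.mem_singleton] at hw
          subst hw
          simp [hv]
    · obtain ⟨z, x, hadj, hx, hz, q, hsub, hqX⟩ := ih hb hu
      refine ⟨z, x, hadj, hx, hz, q.cons h, ?_, ?_⟩
      · intro w hw
        simp only [Walk.support_cons, List.mem_cons] at hw ⊢
        rcases hw with rfl | hw
        · exact Or.inl rfl
        · exact Or.inr (hsub w hw)
      · intro w hw
        simp only [Walk.support_cons, List.mem_cons] at hw
        rcases hw with rfl | hw
        · exact hv
        · exact hqX w hw

/-- Lemma 5: an inclusion-minimal reachability set `A` is either contained in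
`X ∪ N(X)` or disjoint from it. -/
theorem R_intersects_U {V : Type*} [Fintype V] (G : SimpleGraph V) (u v : V) (k t : ℕ)
    (hk : 1 ≤ k) (X : Set V) (hu : u ∈ X) (hXk : X.ncard ≤ k) (hXt : (vb G X).ncard ≤ t)
    (hXmin : ∀ X' : Set V, X' ⊂ X → u ∈ X' → ¬ ((vb G X').ncard ≤ t))
    (Sv : V → Set V)
    (hSv : ∀ w, (∃ S, isSep G {w} {u} S) →
      isSep G {w} {u} (Sv w) ∧
      (∀ T, isSep G {w} {u} T → (Sv w).ncard ≤ T.ncard) ∧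
      ¬ ∃ T, isSep G {w} {u} T ∧ T.ncard ≤ (Sv w).ncard ∧
        reachAvoid G (Sv w) {w} ⊂ reachAvoid G T {w})
    (hv : v ∉ X ∪ vb G X) (hvsep : ∃ S, isSep G {v} {u} S) (hvt : (Sv v).ncard ≤ t)
    (A : Set V) (hA : A = reachAvoid G (Sv v) {v})
    (hAmin : ∀ w, (∃ S, isSep G {w} {u} S) → (Sv w).ncard ≤ t →
      ¬ (reachAvoid G (Sv w) {w} ⊂ A)) :
    A ⊆ X ∪ vb G X ∨ Disjoint A (X ∪ vb G X) := by
  subst hA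
  obtain ⟨hS, hminsz, -⟩ := hSv v hvsep
  set S := Sv v with hSdef
  set A := reachAvoid G S {v} with hAdef
  have hvX : v ∉ X := fun h => hv (Or.inl h)
  have hvvb : v ∉ vb G X := fun h => hv (Or.inr h)
  have hvS : v ∉ S := fun h => (hS.1 h) (Or.inl rfl)
  have huS : u ∉ S := fun h => (hS.1 h) (Or.inr rfl)
  have huA : u ∉ A := hS.2 u rfl
  have hclose : ∀ a z, a ∈ A → G.Adj a z → z ∉ S → z ∈ A := by
    rintro a z ⟨x, hx, p, hp⟩ hadj hzS
    rw [Set.mem_singleton_iff] at hx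
    rcases hx.symm with rfl
    refine ⟨v, rfl, p.concat hadj, ?_⟩
    intro w hw
    rw [Walk.support_concat, List.mem_append] at hw
    rcases hw with hw | hw
    · exact hp w hw
    · simp only [List.mem_singleton] at hw; subst hw; exact hzS
  -- the modified separator
  set T7 : Set V := (S \ X) ∪ (vb G X ∩ A) with hT7def
  have hT7sep : isSep G {v} {u} T7 := by
    constructor
    · intro w hw
      simp only [Set.mem_compl_iff, Set.mem_union, Set.mem_singleton_iff]
      rintro (rfl | rfl)
      · rcases hw with hw | hw
        · exact hvS hw.1
        · exact hvvb hw.1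
      · rcases hw with hw | hw
        · exact huS hw.1
        · exact hw.1.1 hu
    · rintro y rfl ⟨x, hx, p, hp⟩
      rw [Set.mem_singleton_iff] at hx
      rcases hx.symm with rfl
      obtain ⟨z, x', hadj, hx'X, hzX, q, hqsub, hqX⟩ := crossing p hvX hu
      have hqS : ∀ w ∈ q.support, w ∉ S := by
        intro w hw hwS
        exact hp w (hqsub w hw) (Or.inl ⟨hwS, hqX w hw⟩)
      have hzA : z ∈ A := ⟨v, rfl, q, hqS⟩
      have hzvb : z ∈ vb G X := ⟨hzX, x', hx'X, hadj.symm⟩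
      exact hp z (hqsub z q.end_mem_support) (Or.inr ⟨hzvb, hzA⟩)
  have hineq1 : S.ncard ≤ T7.ncard := hminsz T7 hT7sep
  have hineq2 : T7.ncard ≤ (S \ X).ncard + (vb G X ∩ A).ncard := Set.ncard_union_le _ _
  have hSsplit : (S ∩ X).ncard + (S \ X).ncard = S.ncard :=
    Set.ncard_inter_add_ncard_diff_eq_ncard S X
  have hkey : (S ∩ X).ncard ≤ (vb G X ∩ A).ncard := by omega
  right
  rw [Set.disjoint_left]
  intro a haA haU
  set X' : Set V := X \ (A ∪ S) with hX'def
  have huX' : u ∈ X' := ⟨hu, fun h => h.elim huA huS⟩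
  have hX'ssub : X' ⊂ X := by
    rw [Set.ssubset_iff_of_subset Set.diff_subset]
    rcases haU with haX | havb
    · exact ⟨a, haX, fun h => h.2 (Or.inl haA)⟩
    · obtain ⟨haX, x0, hx0X, hx0adj⟩ := havb
      by_cases hx0S : x0 ∈ S
      · exact ⟨x0, hx0X, fun h => h.2 (Or.inr hx0S)⟩
      · exact ⟨x0, hx0X, fun h => h.2 (Or.inl (hclose a x0 haA hx0adj.symm hx0S))⟩
  have hNsub : vb G X' ⊆ (S ∩ X) ∪ (vb G X \ A) := by
    rintro z ⟨hzX', x, hxX', hadj⟩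
    have hxX : x ∈ X := hxX'.1
    have hzA : z ∉ A := by
      intro hzA
      by_cases hxS : x ∈ S
      · exact hxX'.2 (Or.inr hxS)
      · exact hxX'.2 (Or.inl (hclose z x hzA hadj.symm hxS))
    by_cases hzX : z ∈ X
    · left
      refine ⟨?_, hzX⟩
      by_contra hzS
      exact hzX' ⟨hzX, fun h => h.elim hzA hzS⟩
    · exact Or.inr ⟨⟨hzX, x, hxX, hadj⟩, hzA⟩
  have h1 : (vb G X').ncard ≤ ((S ∩ X) ∪ (vb G X \ A)).ncard :=
    Set.ncard_le_ncard hNsub (Set.toFinite _)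
  have h2 : ((S ∩ X) ∪ (vb G X \ A)).ncard ≤ (S ∩ X).ncard + (vb G X \ A).ncard :=
    Set.ncard_union_le _ _
  have h3 : (vb G X ∩ A).ncard + (vb G X \ A).ncard = (vb G X).ncard :=
    Set.ncard_inter_add_ncard_diff_eq_ncard (vb G X) A
  exact hXmin X' hX'ssub huX' (by omega)
end

section
/- Let G be a finite graph and S, T vertex sets with T an important (Z,u)-separator dominating or equal in the sense |T| ≤ |S| and R(Z,S) ⊆ R(Z,T), where S = N(X) for some set X containing u with V(G) = X ∪ S ∪ R(Z,S) as a disjoint union. Then R(u,T) ∪ T ⊆ X ∪ S, and hence |R(u,T)| + |T| ≤ |X| + |S|. -/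
open SimpleGraph

/-- Lemma 6 (final step): an important `(Z,u)`-separator dominating `S = N(X)` has
`R(u,T) ∪ T ⊆ X ∪ S`. -/
theorem important_separator_small_side {V : Type*} [Fintype V] (G : SimpleGraph V) (u : V)
    (X Z S T : Set V) (hu : u ∈ X) (hS : S = vb G X)
    (hZ : Z ⊆ (X ∪ vb G X)ᶜ) (hZne : Z.Nonempty)
    (hpart : (X ∪ S)ᶜ = reachAvoid G S Z)
    (hT : isImpSep G Z {u} T) (hTS : T.ncard ≤ S.ncard)
    (hR : reachAvoid G S Z ⊆ reachAvoid G T Z) :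
    reachAvoid G T {u} ∪ T ⊆ X ∪ S ∧
      (reachAvoid G T {u}).ncard + T.ncard ≤ X.ncard + S.ncard := by
  have hTsub : T ⊆ X ∪ S := by
    intro t ht
    by_contra h
    obtain ⟨z, hz, p, hp⟩ := hR (hpart ▸ (Set.mem_compl h))
    exact hp t p.end_mem_support ht
  have hRsub : reachAvoid G T {u} ⊆ X ∪ S := by
    intro v hv
    by_contra h
    obtain ⟨z, hz, p, hp⟩ := hR (hpart ▸ (Set.mem_compl h))
    obtain ⟨u', hu', q, hq⟩ := hv
    rw [Set.mem_singleton_iff] at hu'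
    subst hu'
    refine hT.1.2 _ rfl ⟨z, hz, p.append q.reverse, fun w hw => ?_⟩
    rw [SimpleGraph.Walk.mem_support_append_iff] at hw
    rcases hw with hw | hw
    · exact hp w hw
    · rw [SimpleGraph.Walk.support_reverse, List.mem_reverse] at hw
      exact hq w hw
  have hdisj : Disjoint (reachAvoid G T {u}) T := by
    rw [Set.disjoint_left]
    rintro v ⟨u', hu', q, hq⟩ hvT
    exact hq v q.end_mem_support hvT
  refine ⟨Set.union_subset hRsub hTsub, ?_⟩
  calc (reachAvoid G T {u}).ncard + T.ncard
      = (reachAvoid G T {u} ∪ T).ncard :=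
        (Set.ncard_union_eq hdisj (Set.toFinite _) (Set.toFinite _)).symm
    _ ≤ (X ∪ S).ncard :=
        Set.ncard_le_ncard (Set.union_subset hRsub hTsub) (Set.toFinite _)
    _ ≤ X.ncard + S.ncard := Set.ncard_union_le _ _
end

section
/- Let G be a graph constructed from a d-regular graph H on n vertices as follows: start with a clique B on dn vertices, distinguish d vertices of B; for each vertex v of H add a new vertex v' adjacent to all d distinguished vertices; for each edge e = uv of H add a new vertex e' adjacent to u' and v'. If H has a clique K of size k, then the set X consisting of B together with {v' : v ∈ K} and {e' : e ⊆ K} satisfies |X| = dn + k + C(k,2) and |∂(X)| = dn − 2·C(k,2), where ∂(X) is the set of edges with exactly one endpoint in X. -/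
open SimpleGraph

/-- The graph `G'` built from a `d`-regular graph `H`: a base clique on `d·n` vertices with
`d` distinguished vertices, a vertex for each vertex of `H` joined to the distinguished
vertices, and a vertex for each edge of `H` joined to its endpoints. -/
def edgeCutGraph {W : Type*} (H : SimpleGraph W) (d n : ℕ) :
    SimpleGraph (Fin (d * n) ⊕ W ⊕ H.edgeSet) :=
  SimpleGraph.fromRel (fun x y =>
    match x, y with
    | Sum.inl _, Sum.inl _ => True
    | Sum.inl b, Sum.inr (Sum.inl _) => (b : ℕ) < d
    | Sum.inr (Sum.inl v), Sum.inr (Sum.inr e) => v ∈ (e : Sym2 W)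
    | _, _ => False)


open Finset in
theorem clique_edge_count {W : Type*} [Fintype W] [DecidableEq W]
    (H : SimpleGraph W) [DecidableRel H.Adj] (k : ℕ)
    (K : Finset W) (hK : H.IsNClique k K) :
    (Finset.univ.filter (fun e : H.edgeSet => ∀ v ∈ (e : Sym2 W), v ∈ K)).card
      = k.choose 2 := by
  classical
  set EK := Finset.univ.filter (fun e : H.edgeSet => ∀ v ∈ (e : Sym2 W), v ∈ K) with hEK
  have himg : EK.image (fun e : H.edgeSet => (e : Sym2 W))
      = K.sym2.filter (fun z => ¬ z.IsDiag) := by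
    ext z
    induction z using Sym2.ind with
    | _ a b =>
      simp only [mem_image, mem_filter, Finset.mk_mem_sym2_iff, Sym2.mk_isDiag_iff, hEK]
      constructor
      · rintro ⟨⟨e, he⟩, hmem, rfl⟩
        simp only [mem_filter, Finset.mem_univ, true_and] at hmem
        have hab : a ∈ (s(a,b) : Sym2 W) := Sym2.mem_mk_left a b
        have hbb : b ∈ (s(a,b) : Sym2 W) := Sym2.mem_mk_right a b
        refine ⟨⟨hmem a hab, hmem b hbb⟩, ?_⟩
        exact (H.mem_edgeSet.mp he).ne
      · rintro ⟨⟨ha, hb⟩, hne⟩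
        have hadj : H.Adj a b := hK.1 ha hb hne
        refine ⟨⟨s(a,b), H.mem_edgeSet.mpr hadj⟩, ?_, rfl⟩
        simp only [mem_filter, Finset.mem_univ, true_and]
        intro v hv
        rcases Sym2.mem_iff.mp hv with rfl | rfl <;> assumption
  have hinj : (EK.image (fun e : H.edgeSet => (e : Sym2 W))).card = EK.card :=
    Finset.card_image_of_injective _ Subtype.val_injective
  have hdiag : K.sym2.filter (fun z => z.IsDiag) = K.image Sym2.diag := by
    ext z
    induction z using Sym2.ind with
    | _ a b =>
      simp only [mem_filter, Finset.mk_mem_sym2_iff, Sym2.mk_isDiag_iff, mem_image]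
      constructor
      · rintro ⟨⟨ha, hb⟩, rfl⟩
        exact ⟨a, ha, rfl⟩
      · rintro ⟨c, hc, hz⟩
        have : a = c ∧ b = c := by
          rw [Sym2.diag] at hz
          rw [Sym2.eq_iff] at hz
          tauto
        obtain ⟨rfl, rfl⟩ := this
        exact ⟨⟨hc, hc⟩, rfl⟩
  have hsum := Finset.card_filter_add_card_filter_not
    (s := K.sym2) (p := fun z => z.IsDiag)
  rw [hdiag, Finset.card_image_of_injective _ Sym2.diag_injective, hK.2] at hsum
  rw [Finset.card_sym2, hK.2] at hsum
  have : (k + 1).choose 2 = k + k.choose 2 := by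
    rw [Nat.choose_succ_succ]
    simp [Nat.choose_one_right]
  rw [← himg, hinj] at hsum
  omega

theorem arith1 (d n k : ℕ) (hkn : k ≤ n) (hkd : k - 1 ≤ d) :
    d * (n - k) + k * (d - (k - 1)) = d * n - k * (k - 1) := by
  rcases k with _ | m
  · simp
  · obtain ⟨s, rfl⟩ := Nat.exists_eq_add_of_le (by simpa using hkd : m ≤ d)
    obtain ⟨t, rfl⟩ := Nat.exists_eq_add_of_le hkn
    have h1 : m + 1 + t - (m + 1) = t := by omega
    have h2 : m + s - (m + 1 - 1) = s := by omega
    rw [h1, h2]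
    have : (m + s) * t + (m + 1) * s + (m + 1) * (m + 1 - 1) = (m + s) * (m + 1 + t) := by
      have : m + 1 - 1 = m := rfl
      rw [this]; ring
    omega
theorem arith2 (k : ℕ) : 2 * k.choose 2 = k * (k - 1) := by
  rcases k with _ | m
  · simp
  · rw [Nat.choose_two_right]
    have h : 2 ∣ (m + 1) * (m + 1 - 1) := by
      have := Nat.even_mul_succ_self m
      rw [even_iff_two_dvd] at this
      simpa [Nat.mul_comm] using this
    exact Nat.mul_div_cancel' h

/-- If `H` has a `k`-clique `K`, the set consisting of the base clique together with the
vertices of `K` and the edges inside `K` has size `dn + k + C(k,2)` and edge boundary of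
size `dn - 2·C(k,2)`. -/
theorem edge_cut_clique_solution {W : Type*} [Fintype W] [DecidableEq W]
    (H : SimpleGraph W) [DecidableRel H.Adj] (d n k : ℕ)
    (hn : Fintype.card W = n) (hreg : H.IsRegularOfDegree d)
    (K : Finset W) (hK : H.IsNClique k K) :
    let X : Set (Fin (d * n) ⊕ W ⊕ H.edgeSet) :=
      {x | match x with
        | Sum.inl _ => True
        | Sum.inr (Sum.inl v) => v ∈ K
        | Sum.inr (Sum.inr e) => ∀ v ∈ (e : Sym2 W), v ∈ K}
    X.ncard = d * n + k + k.choose 2 ∧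
      (edgeBoundary (edgeCutGraph H d n) X).ncard = d * n - 2 * k.choose 2 := by
  classical
  rcases Nat.eq_zero_or_pos n with rfl | hn1
  · -- degenerate case n = 0
    intro X
    haveI hWe : IsEmpty W := Fintype.card_eq_zero_iff.mp hn
    haveI : IsEmpty (Fin (d * 0)) := ⟨fun x => absurd x.2 (by simp)⟩
    haveI : IsEmpty (H.edgeSet) := ⟨fun e => Sym2.ind (fun a _ _ => hWe.false a) e.1 e.2⟩
    haveI : IsEmpty (Fin (d * 0) ⊕ W ⊕ H.edgeSet) := by infer_instance
    have hk : k = 0 := by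
      rw [← hK.2]
      exact Finset.card_eq_zero.mpr (Finset.eq_empty_of_isEmpty K)
    have hX0 : X = ∅ := Set.eq_empty_of_isEmpty X
    have hB0 : edgeBoundary (edgeCutGraph H d 0) X = ∅ :=
      Set.eq_empty_of_isEmpty _
    rw [hB0, hX0]
    simp [hk]
  intro X
  have hXmem : ∀ x, x ∈ X ↔ (match x with
      | Sum.inl _ => True
      | Sum.inr (Sum.inl v) => v ∈ K
      | Sum.inr (Sum.inr e) => ∀ v ∈ (e : Sym2 W), v ∈ K) := fun _ => Iff.rfl
  have hkK := hK.2
  have hclique := hK.1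
  have hkn : k ≤ n := by
    rw [← hkK, ← hn]; exact Finset.card_le_univ K
  set EK := Finset.univ.filter (fun e : H.edgeSet => ∀ v ∈ (e : Sym2 W), v ∈ K) with hEKdef
  have hEK : EK.card = k.choose 2 := clique_edge_count H k K hK
  constructor
  · -- cardinality of X
    set F : Finset (Fin (d * n) ⊕ W ⊕ H.edgeSet) :=
      (Finset.univ.image (Sum.inl : Fin (d*n) → _)) ∪
        K.image (fun v => Sum.inr (Sum.inl v)) ∪
        EK.image (fun e => Sum.inr (Sum.inr e)) with hFdef
    have hXF : X = ↑F := by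
      ext x
      rcases x with b | v | e <;>
        simp [hXmem, hFdef, hEKdef]
    rw [hXF, Set.ncard_coe_finset]
    have hd1 : Disjoint (Finset.univ.image (Sum.inl : Fin (d*n) → _))
        (K.image (fun v => Sum.inr (Sum.inl v)) : Finset (Fin (d * n) ⊕ W ⊕ H.edgeSet)) := by
      simp [Finset.disjoint_left]
    have hd2 : Disjoint ((Finset.univ.image (Sum.inl : Fin (d*n) → _)) ∪
        K.image (fun v => Sum.inr (Sum.inl v)))
        (EK.image (fun e => Sum.inr (Sum.inr e)) : Finset (Fin (d * n) ⊕ W ⊕ H.edgeSet)) := by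
      simp [Finset.disjoint_left]
    rw [hFdef, Finset.card_union_of_disjoint hd2, Finset.card_union_of_disjoint hd1]
    rw [Finset.card_image_of_injective _ Sum.inl_injective,
      Finset.card_image_of_injective _ (fun a b h => by simpa using h),
      Finset.card_image_of_injective _ (fun a b h => by simpa using h)]
    simp [hkK, hEK, hn]
  · -- edge boundary
    set B1 : Finset (Sym2 (Fin (d * n) ⊕ W ⊕ H.edgeSet)) :=
      ((Finset.univ.filter fun b : Fin (d*n) => (b:ℕ) < d) ×ˢ (Finset.univ \ K)).image
        (fun p => s(Sum.inl p.1, Sum.inr (Sum.inl p.2))) with hB1def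
    set B2 : Finset (Sym2 (Fin (d * n) ⊕ W ⊕ H.edgeSet)) :=
      (Finset.univ.filter (fun p : W × H.edgeSet =>
          p.1 ∈ K ∧ p.1 ∈ (p.2 : Sym2 W) ∧ ¬ ∀ v ∈ ((p.2 : Sym2 W)), v ∈ K)).image
        (fun p => s(Sum.inr (Sum.inl p.1), Sum.inr (Sum.inr p.2))) with hB2def
    have hadj : ∀ a b, (edgeCutGraph H d n).Adj a b ↔ a ≠ b ∧
        ((match a, b with
          | Sum.inl _, Sum.inl _ => True
          | Sum.inl b, Sum.inr (Sum.inl _) => (b : ℕ) < d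
          | Sum.inr (Sum.inl v), Sum.inr (Sum.inr e) => v ∈ (e : Sym2 W)
          | _, _ => False) ∨
         (match b, a with
          | Sum.inl _, Sum.inl _ => True
          | Sum.inl b, Sum.inr (Sum.inl _) => (b : ℕ) < d
          | Sum.inr (Sum.inl v), Sum.inr (Sum.inr e) => v ∈ (e : Sym2 W)
          | _, _ => False)) := fun a b => SimpleGraph.fromRel_adj _ a b
    have hbd : edgeBoundary (edgeCutGraph H d n) X = ↑(B1 ∪ B2) := by
      ext z
      simp only [edgeBoundary, Set.mem_setOf_eq, Finset.coe_union, Set.mem_union,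
        Finset.mem_coe]
      constructor
      · rintro ⟨a, b, rfl, hab, haX, hbX⟩
        rw [hadj] at hab
        obtain ⟨hne, hr⟩ := hab
        rcases a with b1 | v | e <;> rcases b with b2 | u | f <;>
          simp only [hXmem] at haX hbX
        · exact absurd trivial hbX
        · left
          rw [hB1def]
          simp only [Finset.mem_image, Finset.mem_product, Finset.mem_filter, Finset.mem_univ,
            Finset.mem_sdiff, true_and, Prod.exists]
          exact ⟨b1, u, ⟨hr.resolve_right (fun h => h), hbX⟩, rfl⟩
        · exact hr.elim (fun h => h.elim) (fun h => h.elim)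
        · exact absurd trivial hbX
        · exact hr.elim (fun h => h.elim) (fun h => h.elim)
        · right
          rw [hB2def]
          simp only [Finset.mem_image, Finset.mem_filter, Finset.mem_univ, true_and, Prod.exists]
          exact ⟨v, f, ⟨haX, hr.resolve_right (fun h => h), hbX⟩, rfl⟩
        · exact absurd trivial hbX
        · exact absurd (haX u (hr.resolve_left (fun h => h))) hbX
        · exact hr.elim (fun h => h.elim) (fun h => h.elim)
      · rintro (hz | hz)
        · rw [hB1def] at hz
          simp only [Finset.mem_image, Finset.mem_product, Finset.mem_filter, Finset.mem_univ,
            Finset.mem_sdiff, true_and, Prod.exists] at hz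
          obtain ⟨b1, u, ⟨hb1, hu⟩, rfl⟩ := hz
          refine ⟨Sum.inl b1, Sum.inr (Sum.inl u), rfl, ?_, ?_, ?_⟩
          · rw [hadj]; exact ⟨by simp, Or.inl hb1⟩
          · rw [hXmem]; trivial
          · rw [hXmem]; exact hu
        · rw [hB2def] at hz
          simp only [Finset.mem_image, Finset.mem_filter, Finset.mem_univ, true_and,
            Prod.exists] at hz
          obtain ⟨v, f, ⟨hv, hvf, hf⟩, rfl⟩ := hz
          refine ⟨Sum.inr (Sum.inl v), Sum.inr (Sum.inr f), rfl, ?_, ?_, ?_⟩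
          · rw [hadj]; exact ⟨by simp, Or.inl hvf⟩
          · rw [hXmem]; exact hv
          · rw [hXmem]; exact hf
    rw [hbd, Set.ncard_coe_finset]
    have hdisj : Disjoint B1 B2 := by
      rw [Finset.disjoint_left]
      rintro z hz1 hz2
      rw [hB1def] at hz1; rw [hB2def] at hz2
      simp only [Finset.mem_image, Prod.exists] at hz1 hz2
      obtain ⟨b1, u, _, rfl⟩ := hz1
      obtain ⟨v, f, _, h⟩ := hz2
      rw [Sym2.eq_iff] at h
      rcases h with ⟨h1, h2⟩ | ⟨h1, h2⟩
      · exact absurd h1 (by simp)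
      · exact absurd h2 (by simp)
    have hinj1 : Function.Injective
        (fun p : Fin (d*n) × W => s(Sum.inl p.1, Sum.inr (Sum.inl p.2)) :
          Fin (d*n) × W → Sym2 (Fin (d * n) ⊕ W ⊕ H.edgeSet)) := by
      rintro ⟨p1, p2⟩ ⟨q1, q2⟩ h
      simp only [Sym2.eq_iff] at h
      rcases h with ⟨h1, h2⟩ | ⟨h1, h2⟩
      · simp only [Sum.inl.injEq, Sum.inr.injEq] at h1 h2
        exact Prod.ext h1 h2
      · exact absurd h1 (by simp)
    have hc1 : B1.card = d * (n - k) := by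
      rw [hB1def, Finset.card_image_of_injective _ hinj1, Finset.card_product]
      have hdle : d ≤ d * n := Nat.le_mul_of_pos_right d hn1
      have himg : (Finset.univ.filter fun b : Fin (d*n) => (b:ℕ) < d).image Fin.val
          = Finset.range d := by
        ext x
        simp only [Finset.mem_image, Finset.mem_filter, Finset.mem_univ, true_and,
          Finset.mem_range]
        constructor
        · rintro ⟨b, hb, rfl⟩; exact hb
        · intro hx; exact ⟨⟨x, lt_of_lt_of_le hx hdle⟩, hx, rfl⟩
      have hcf := Finset.card_image_of_injective
        (Finset.univ.filter fun b : Fin (d*n) => (b:ℕ) < d) Fin.val_injective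
      rw [himg, Finset.card_range] at hcf
      rw [← hcf, Finset.card_sdiff_of_subset (Finset.subset_univ K), Finset.card_univ, hn, hkK]
    have hinj2 : Function.Injective
        (fun p : W × H.edgeSet => s(Sum.inr (Sum.inl p.1), Sum.inr (Sum.inr p.2)) :
          W × H.edgeSet → Sym2 (Fin (d * n) ⊕ W ⊕ H.edgeSet)) := by
      rintro ⟨p1, p2⟩ ⟨q1, q2⟩ h
      simp only [Sym2.eq_iff] at h
      rcases h with ⟨h1, h2⟩ | ⟨h1, h2⟩
      · simp only [Sum.inr.injEq, Sum.inl.injEq] at h1 h2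
        exact Prod.ext h1 h2
      · exact absurd h1 (by simp)
    have hc2 : B2.card = k * (d - (k - 1)) := by
      rw [hB2def, Finset.card_image_of_injective _ hinj2]
      have hbij := Finset.card_bij
        (s := K.sigma fun v => H.neighborFinset v \ K)
        (t := Finset.univ.filter (fun p : W × H.edgeSet =>
          p.1 ∈ K ∧ p.1 ∈ (p.2 : Sym2 W) ∧ ¬ ∀ v ∈ ((p.2 : Sym2 W)), v ∈ K))
        (fun a ha => (a.1, ⟨s(a.1, a.2), H.mem_edgeSet.mpr
          ((H.mem_neighborFinset _ _).mp
            (Finset.mem_sdiff.mp (Finset.mem_sigma.mp ha).2).1)⟩))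
        (by
          rintro ⟨v, u⟩ ha
          obtain ⟨hv, hu⟩ := Finset.mem_sigma.mp ha
          obtain ⟨hnb, huK⟩ := Finset.mem_sdiff.mp hu
          simp only [Finset.mem_filter, Finset.mem_univ, true_and]
          refine ⟨hv, Sym2.mem_mk_left _ _, fun hall => huK (hall u (Sym2.mem_mk_right _ _))⟩)
        (by
          rintro ⟨v, u⟩ ha ⟨v', u'⟩ ha' h
          have hv : v ∈ K := (Finset.mem_sigma.mp ha).1
          have huK' : u' ∉ K := (Finset.mem_sdiff.mp (Finset.mem_sigma.mp ha').2).2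
          have hfst : v = v' := congrArg Prod.fst h
          subst hfst
          have hsnd : (s(v, u) : Sym2 W) = s(v, u') :=
            Subtype.ext_iff.mp (congrArg Prod.snd h)
          rw [Sym2.eq_iff] at hsnd
          rcases hsnd with ⟨_, h2⟩ | ⟨h1, h2⟩
          · simp [h2]
          · exact absurd (h1 ▸ hv) huK')
        (by
          rintro ⟨v, e⟩ hb
          simp only [Finset.mem_filter, Finset.mem_univ, true_and] at hb
          obtain ⟨hv, hve, hns⟩ := hb
          push_neg at hns
          obtain ⟨w, hw, hwK⟩ := hns
          set u := Sym2.Mem.other' hve with hu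
          have hsp : s(v, u) = (e : Sym2 W) := Sym2.other_spec' hve
          have hadjvu : H.Adj v u := H.mem_edgeSet.mp (hsp ▸ e.2)
          have huK : u ∉ K := by
            rw [← hsp, Sym2.mem_iff] at hw
            rcases hw with rfl | rfl
            · exact absurd hv hwK
            · exact hwK
          refine ⟨⟨v, u⟩, Finset.mem_sigma.mpr
            ⟨hv, Finset.mem_sdiff.mpr ⟨(H.mem_neighborFinset _ _).mpr hadjvu, huK⟩⟩, ?_⟩
          exact Prod.ext rfl (Subtype.ext hsp))
      rw [← hbij, Finset.card_sigma]
      have hterm : ∀ v ∈ K, (H.neighborFinset v \ K).card = d - (k - 1) := by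
        intro v hv
        have hint : H.neighborFinset v ∩ K = K.erase v := by
          ext u
          simp only [Finset.mem_inter, SimpleGraph.mem_neighborFinset, Finset.mem_erase]
          constructor
          · rintro ⟨hadj', hu⟩; exact ⟨hadj'.ne', hu⟩
          · rintro ⟨hne, hu⟩
            exact ⟨hclique (Finset.mem_coe.mpr hv) (Finset.mem_coe.mpr hu) (Ne.symm hne), hu⟩
        have h1 := Finset.card_sdiff_add_card_inter (H.neighborFinset v) K
        rw [hint, Finset.card_erase_of_mem hv, hkK,
          SimpleGraph.card_neighborFinset_eq_degree, hreg v] at h1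
        omega
      rw [Finset.sum_congr rfl hterm, Finset.sum_const, hkK, smul_eq_mul]
    have hkd : k - 1 ≤ d := by
      rcases Nat.eq_zero_or_pos k with rfl | hk0
      · simp
      · have : K.Nonempty := by rw [← Finset.card_pos, hkK]; exact hk0
        obtain ⟨v, hv⟩ := this
        have hsub : K.erase v ⊆ H.neighborFinset v := by
          intro u hu
          obtain ⟨hne, hu⟩ := Finset.mem_erase.mp hu
          exact (H.mem_neighborFinset _ _).mpr
            (hclique (Finset.mem_coe.mpr hv) (Finset.mem_coe.mpr hu) (Ne.symm hne))
        have := Finset.card_le_card hsub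
        rw [Finset.card_erase_of_mem hv, hkK, SimpleGraph.card_neighborFinset_eq_degree,
          hreg v] at this
        exact this
    rw [Finset.card_union_of_disjoint hdisj, hc1, hc2, arith2]
    exact arith1 d n k hkn hkd
end

section
/- Let G be a finite graph, u a vertex, X an inclusion-minimal set containing u with |N(X)| ≤ t, and let A, Y ⊆ V(G) \ (X ∪ N(X)) be sets with |N(A ∪ Y)| ≤ |N(Y)| where Y = V(G) \ (X ∪ N(X)). Then X' = X \ (A ∪ Y ∪ N(A ∪ Y)) satisfies N(X') ⊆ N(A ∪ Y) ∪ (N(X) \ N(Y)) and |N(X')| ≤ |N(X)|. -/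
open SimpleGraph

/-- Neighborhood-containment step from Lemma 5:
`N(X') ⊆ N(A ∪ Y) ∪ (N(X) \ N(Y))` and `|N(X')| ≤ |N(X)|`. -/
theorem trimmed_set_neighborhood {V : Type*} [Fintype V] (G : SimpleGraph V) (u : V)
    (t : ℕ) (X A Y : Set V) (hu : u ∈ X) (hXt : (vb G X).ncard ≤ t)
    (hXmin : ∀ X' : Set V, X' ⊂ X → u ∈ X' → ¬ ((vb G X').ncard ≤ t))
    (hY : Y = (X ∪ vb G X)ᶜ) (hAsub : A ⊆ (X ∪ vb G X)ᶜ)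
    (hAY : (vb G (A ∪ Y)).ncard ≤ (vb G Y).ncard) :
    vb G (X \ (A ∪ Y ∪ vb G (A ∪ Y))) ⊆ vb G (A ∪ Y) ∪ (vb G X \ vb G Y) ∧
      (vb G (X \ (A ∪ Y ∪ vb G (A ∪ Y)))).ncard ≤ (vb G X).ncard := by

  -- A ∪ Y avoids X and N(X)
  have hAYsub : A ∪ Y ⊆ (X ∪ vb G X)ᶜ := by
    rw [hY]; exact Set.union_subset hAsub (subset_refl _)
  -- no vertex of X is adjacent to a vertex of A ∪ Y
  have hnoadj : ∀ x ∈ X, ∀ z ∈ A ∪ Y, ¬ G.Adj z x := by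
    intro x hx z hz hadj
    have hz' := hAYsub hz
    simp only [Set.mem_compl_iff, Set.mem_union, not_or] at hz'
    exact hz'.2 ⟨hz'.1, x, hx, hadj.symm⟩
  -- X ∩ vb G (A ∪ Y) = ∅
  have hXdisj : ∀ x ∈ X, x ∉ vb G (A ∪ Y) := by
    intro x hx ⟨_, z, hz, hadj⟩
    exact hnoadj x hx z hz hadj
  have hsub : vb G (X \ (A ∪ Y ∪ vb G (A ∪ Y))) ⊆ vb G (A ∪ Y) ∪ (vb G X \ vb G Y) := by
    rintro v ⟨hvnX', x, hx, hadj⟩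
    by_cases hvAY : v ∈ vb G (A ∪ Y)
    · exact Or.inl hvAY
    right
    have hxX : x ∈ X := hx.1
    -- v ∉ X : otherwise v ∈ X', since X ∩ (A ∪ Y ∪ N(A∪Y)) = ∅
    have hvnX : v ∉ X := by
      intro hvX
      apply hvnX'
      refine ⟨hvX, ?_⟩
      rintro (hv | hv)
      · exact hnoadj x hxX v hv (by
          exact absurd (hAYsub hv) (by simp [hvX]))
      · exact hXdisj v hvX hv
    have hvX : v ∈ vb G X := ⟨hvnX, x, hxX, hadj⟩
    refine ⟨hvX, ?_⟩
    rintro ⟨hvnY, y, hy, hadjy⟩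
    -- y ∈ Y ⊆ A ∪ Y, v adjacent to y, v ∉ vb(A∪Y) so v ∈ A ∪ Y
    have hvAY' : v ∈ A ∪ Y := by
      by_contra hv
      exact hvAY ⟨hv, y, Or.inr hy, hadjy⟩
    have := hAYsub hvAY'
    simp only [Set.mem_compl_iff, Set.mem_union, not_or] at this
    exact this.2 hvX
  refine ⟨hsub, ?_⟩
  -- vb G Y ⊆ vb G X
  have hYsubX : vb G Y ⊆ vb G X := by
    rintro v ⟨hvnY, y, hy, hadj⟩
    rw [hY] at hy
    simp only [Set.mem_compl_iff, Set.mem_union, not_or] at hy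
    have hvnX : v ∉ X := by
      intro hvX
      exact hy.2 ⟨hy.1, v, hvX, hadj.symm⟩
    rw [hY] at hvnY
    simp only [Set.mem_compl_iff, Set.mem_union, not_or, not_and, not_not] at hvnY
    rcases Classical.em (v ∈ X) with h | h
    · exact absurd h hvnX
    · exact hvnY h
  have h1 : (vb G X \ vb G Y).ncard = (vb G X).ncard - (vb G Y).ncard :=
    Set.ncard_diff hYsubX (Set.toFinite _)
  have h2 : (vb G Y).ncard ≤ (vb G X).ncard := Set.ncard_le_ncard hYsubX (Set.toFinite _)
  calc (vb G (X \ (A ∪ Y ∪ vb G (A ∪ Y)))).ncard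
      ≤ (vb G (A ∪ Y) ∪ (vb G X \ vb G Y)).ncard :=
        Set.ncard_le_ncard hsub (Set.toFinite _)
    _ ≤ (vb G (A ∪ Y)).ncard + (vb G X \ vb G Y).ncard :=
        Set.ncard_union_le _ _
    _ ≤ (vb G X).ncard := by omega
end
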